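/- Let X be a finite subset of a metric space, let X' be a nonempty subset of X, and let x'' be an element of X that is not in X'. Then D_{X' ∪ {x''}}(X) ≤ D_{X'}(X) − d_{X'}(x''), i.e., the total shortest-distance sum with respect to the enlarged subset X' ∪ {x''} is at most the total with respect to X' minus the (positive) distance from x'' to X'. -/

import Mathlib

/-- The distance from `x` to the nearest element of a nonempty finite set `X'`. -/
noncomputable def nearestDist {α : Type*} [MetricSpace α]
    (X' : Finset α) (h : X'.Nonempty) (x : α) : ℝ :=
  X'.inf' h (fun y => dist x y)

/-- The total shortest-distance sum `D_{X'}(X) = Σ_{x ∈ X} d_{X'}(x)`. -/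
noncomputable def totalDist {α : Type*} [MetricSpace α]
    (X X' : Finset α) (h : X'.Nonempty) : ℝ :=
  ∑ x ∈ X, nearestDist X' h x

section NearestDist

variable {α : Type*} [MetricSpace α]

theorem nearestDist_nonneg (s : Finset α) (hs : s.Nonempty) (x : α) :
    0 ≤ nearestDist s hs x :=
  Finset.le_inf' _ _ fun _ _ => dist_nonneg

theorem nearestDist_eq_zero_of_mem {s : Finset α} (hs : s.Nonempty) {x : α} (hx : x ∈ s) :
    nearestDist s hs x = 0 :=
  le_antisymm ((Finset.inf'_le _ hx).trans_eq (dist_self x)) (nearestDist_nonneg s hs x)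

theorem nearestDist_anti {s t : Finset α} (hst : s ⊆ t) (hs : s.Nonempty) (ht : t.Nonempty)
    (x : α) : nearestDist t ht x ≤ nearestDist s hs x :=
  Finset.inf'_mono _ hst hs

end NearestDist

theorem totalDist_insert_le_sub_general {α : Type*} [MetricSpace α] [DecidableEq α]
    (X X' : Finset α) (hX' : X'.Nonempty)
    (x'' : α) (hmem : x'' ∈ X) :
    totalDist X (insert x'' X') (Finset.insert_nonempty x'' X') ≤
      totalDist X X' hX' - nearestDist X' hX' x'' := by
  have hzero := nearestDist_eq_zero_of_mem (Finset.insert_nonempty x'' X')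
    (Finset.mem_insert_self x'' X')
  calc totalDist X (insert x'' X') (Finset.insert_nonempty x'' X')
      = ∑ x ∈ X.erase x'', nearestDist (insert x'' X') (Finset.insert_nonempty x'' X') x := by
        rw [totalDist, ← Finset.add_sum_erase _ _ hmem, hzero, zero_add]
    _ ≤ ∑ x ∈ X.erase x'', nearestDist X' hX' x :=
        Finset.sum_le_sum fun x _ =>
          nearestDist_anti (Finset.subset_insert x'' X') hX' (Finset.insert_nonempty x'' X') x
    _ = totalDist X X' hX' - nearestDist X' hX' x'' := Finset.sum_erase_eq_sub hmem

theorem totalDist_insert_le_sub {α : Type*} [MetricSpace α] [DecidableEq α]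
    (X X' : Finset α) (hX' : X'.Nonempty) (hsub : X' ⊆ X)
    (x'' : α) (hmem : x'' ∈ X) (hnot : x'' ∉ X') :
    totalDist X (insert x'' X') (Finset.insert_nonempty x'' X') ≤
      totalDist X X' hX' - nearestDist X' hX' x'' :=
  totalDist_insert_le_sub_general X X' hX' x'' hmem
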